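/- Stability implies generalization (in expectation, Lipschitz case): Let ℓ: ℝ^d × Z → ℝ be L-Lipschitz in its first argument. Let S = (z₁,...,z_n) and S̃ = (z'₁,...,z'_n) be two independent i.i.d. samples from distribution P, and for i ∈ [n] let S^i be S with z_i replaced by z'_i. Let A be a deterministic map from datasets to ℝ^d. Then E_{S,S̃}[L_P(A(S)) − L_S(A(S))] ≤ L · E_{S,S̃}[(1/n)Σ_{i=1}^n ‖A(S) − A(S^i)‖₂], where L_P(w) = E_{z∼P} ℓ(w,z) and L_S(w) = (1/n)Σ_i ℓ(w, z_i). -/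

import Mathlib

/-!
Exchanging `zᵢ` and `z'ᵢ` is a measure-preserving involution of `P^n ⊗ P^n` that turns
`ℓ(A(S^i), zᵢ)` into `ℓ(A(S), z'ᵢ)`, whose mean is `E[L_P(A(S))]`. So the expected gap is
`E[(1/n) Σᵢ (ℓ(A(S^i), zᵢ) - ℓ(A(S), zᵢ))]`, and the Lipschitz bound controls each term.

The real work is integrability: only sums over `i` are known to be integrable. The sum
`Σᵢ ℓ(A(S), z'ᵢ)` is compared with the empirical risk through `‖A(S) - A(S̃)‖`, which is
integrable by telescoping along the hybrids of `S` and `S̃`. Then each of its terms is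
integrable because the `z'ᵢ` are independent: integrating out all but one of them is a
contraction in `L¹`.
-/

open MeasureTheory Function

theorem MeasureTheory.MeasurePreserving.integral_comp_of_aestronglyMeasurable {α β E : Type*}
    [MeasurableSpace α] [MeasurableSpace β] [NormedAddCommGroup E] [NormedSpace ℝ E]
    {μ : Measure α} {ν : Measure β} {f : α → β} (hf : MeasurePreserving f μ ν) {φ : β → E}
    (hφ : AEStronglyMeasurable φ ν) : ∫ x, φ (f x) ∂μ = ∫ y, φ y ∂ν := by
  rw [← hf.map_eq] at hφ ⊢
  exact (integral_map hf.measurable.aemeasurable hφ).symm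

section ProductIntegrability

variable {X Y E : Type*} [MeasurableSpace X] [MeasurableSpace Y] [NormedAddCommGroup E]
  {μ : Measure X} {ν : Measure Y} {g : X → E} {h : Y → E}

theorem MeasureTheory.Integrable.left_of_add_prod [IsFiniteMeasure μ] [SFinite ν] [NeZero ν]
    (hgh : Integrable (fun p : X × Y => g p.1 + h p.2) (μ.prod ν)) : Integrable g μ := by
  obtain ⟨y, hy⟩ := hgh.prod_left_ae.exists
  simpa [Pi.sub_def] using hy.sub (integrable_const (h y))

theorem integral_norm_le_integral_norm_add_prod [NormedSpace ℝ E] [CompleteSpace E]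
    [IsProbabilityMeasure μ] [IsProbabilityMeasure ν] (hg : Integrable g μ) (hh : Integrable h ν)
    (hgh : Integrable (fun p : X × Y => g p.1 + h p.2) (μ.prod ν)) :
    ∫ x, ‖g x‖ ∂μ ≤ ∫ p, ‖g p.1 + h p.2‖ ∂(μ.prod ν) + ‖∫ y, h y ∂ν‖ := by
  have hslice (x : X) : ‖g x + ∫ y, h y ∂ν‖ ≤ ∫ y, ‖g x + h y‖ ∂ν := by
    simpa [integral_add (integrable_const _) hh] using
      norm_integral_le_integral_norm (μ := ν) fun y => g x + h y
  have hshift : Integrable (fun x => ‖g x + ∫ y, h y ∂ν‖) μ := (hg.add (integrable_const _)).norm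
  calc ∫ x, ‖g x‖ ∂μ ≤ ∫ x, (‖g x + ∫ y, h y ∂ν‖ + ‖∫ y, h y ∂ν‖) ∂μ :=
        integral_mono hg.norm (hshift.add (integrable_const _)) fun x => norm_le_add_norm_add _ _
    _ ≤ ∫ x, ∫ y, ‖g x + h y‖ ∂ν ∂μ + ‖∫ y, h y ∂ν‖ := by
        rw [integral_add hshift (integrable_const _)]
        simpa using integral_mono hshift hgh.integral_norm_prod_left hslice
    _ = ∫ p, ‖g p.1 + h p.2‖ ∂(μ.prod ν) + ‖∫ y, h y ∂ν‖ := by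
        rw [integral_prod _ hgh.norm]

end ProductIntegrability

section IIDSums

variable {Z E : Type*} [MeasurableSpace Z] [NormedAddCommGroup E] {P : Measure Z}
  [IsProbabilityMeasure P] {ξ : Z → E}

theorem integral_comp_eval_pi [NormedSpace ℝ E] {ι : Type*} [Fintype ι] (i : ι)
    (hξ : AEStronglyMeasurable ξ P) :
    ∫ s : ι → Z, ξ (s i) ∂(Measure.pi fun _ => P) = ∫ z, ξ z ∂P :=
  (measurePreserving_eval (fun _ : ι => P) i).integral_comp_of_aestronglyMeasurable hξ

theorem integral_sum_comp_eval_pi [NormedSpace ℝ E] {ι : Type*} [Fintype ι]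
    (hξ : Integrable ξ P) :
    ∫ s : ι → Z, ∑ i, ξ (s i) ∂(Measure.pi fun _ => P) = Fintype.card ι • ∫ z, ξ z ∂P := by
  have hcomp (i : ι) : Integrable (fun s : ι → Z => ξ (s i)) (Measure.pi fun _ => P) :=
    (measurePreserving_eval (fun _ : ι => P) i).integrable_comp_of_integrable hξ
  simp [integral_finsetSum _ fun i _ => hcomp i, integral_comp_eval_pi _ hξ.aestronglyMeasurable]

variable {m : ℕ}

theorem sum_comp_piFinSuccAbove_zero :
    (fun p : Z × (Fin m → Z) => ξ p.1 + ∑ k, ξ (p.2 k)) ∘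
        MeasurableEquiv.piFinSuccAbove (fun _ : Fin (m + 1) => Z) 0 =
      fun s => ∑ i, ξ (s i) := by
  funext s
  simp [Fin.sum_univ_succ, MeasurableEquiv.piFinSuccAbove, Fin.tail]

theorem integrable_add_prod_iff_sum_pi :
    Integrable (fun p : Z × (Fin m → Z) => ξ p.1 + ∑ k, ξ (p.2 k))
        (P.prod (Measure.pi fun _ => P)) ↔
      Integrable (fun s : Fin (m + 1) → Z => ∑ i, ξ (s i)) (Measure.pi fun _ => P) := by
  rw [← sum_comp_piFinSuccAbove_zero,
    (measurePreserving_piFinSuccAbove (fun _ => P) 0).integrable_comp_emb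
      (MeasurableEquiv.measurableEmbedding _)]

theorem MeasureTheory.Integrable.of_sum_pi
    (h : Integrable (fun s : Fin (m + 1) → Z => ∑ i, ξ (s i)) (Measure.pi fun _ => P)) :
    Integrable ξ P :=
  Integrable.left_of_add_prod (h := fun y : Fin m → Z => ∑ k, ξ (y k))
    (integrable_add_prod_iff_sum_pi.2 h)

theorem integral_norm_le_two_mul_integral_norm_sum_pi [NormedSpace ℝ E] [CompleteSpace E]
    (h : Integrable (fun s : Fin (m + 1) → Z => ∑ i, ξ (s i)) (Measure.pi fun _ => P)) :
    ∫ z, ‖ξ z‖ ∂P ≤ 2 * ∫ s, ‖∑ i, ξ (s i)‖ ∂(Measure.pi fun _ : Fin (m + 1) => P) := by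
  have hξ := h.of_sum_pi
  have hrest : Integrable (fun y : Fin m → Z => ∑ k, ξ (y k)) (Measure.pi fun _ => P) :=
    integrable_finsetSum _ fun k _ =>
      (measurePreserving_eval (fun _ : Fin m => P) k).integrable_comp_of_integrable hξ
  have hsplit :=
    integral_norm_le_integral_norm_add_prod hξ hrest (integrable_add_prod_iff_sum_pi.2 h)
  have hnorm : ∫ p : Z × (Fin m → Z), ‖ξ p.1 + ∑ k, ξ (p.2 k)‖ ∂(P.prod (Measure.pi fun _ => P)) =
      ∫ s, ‖∑ i, ξ (s i)‖ ∂(Measure.pi fun _ : Fin (m + 1) => P) := by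
    rw [← (measurePreserving_piFinSuccAbove (fun _ => P) 0).integral_comp']
    exact congrArg (integral _)
      (funext fun s => congrArg norm (congrFun sum_comp_piFinSuccAbove_zero s))
  have hmean : ((m : ℝ) + 1) * ‖∫ z, ξ z ∂P‖ ≤
      ∫ s, ‖∑ i, ξ (s i)‖ ∂(Measure.pi fun _ : Fin (m + 1) => P) := by
    have := norm_integral_le_integral_norm (μ := Measure.pi fun _ : Fin (m + 1) => P)
      fun s => ∑ i, ξ (s i)
    rw [integral_sum_comp_eval_pi hξ, RCLike.norm_nsmul ℝ] at this
    simpa using this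
  rw [integral_sum_comp_eval_pi hξ, RCLike.norm_nsmul ℝ, hnorm] at hsplit
  simp only [Fintype.card_fin, nsmul_eq_mul] at hsplit
  nlinarith [norm_nonneg (∫ z, ξ z ∂P)]

end IIDSums

section Resampling

variable {ι Z : Type*}

noncomputable abbrev doubleSampleLaw [MeasurableSpace Z] (P : Measure Z) (ι : Type*) [Fintype ι] :
    Measure ((ι → Z) × (ι → Z)) :=
  (Measure.pi fun _ => P).prod (Measure.pi fun _ => P)

def swapOn (p : ι → Prop) [DecidablePred p] (q : (ι → Z) × (ι → Z)) : (ι → Z) × (ι → Z) :=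
  (fun k => if p k then q.2 k else q.1 k, fun k => if p k then q.1 k else q.2 k)

theorem measurePreserving_swapOn [MeasurableSpace Z] [Fintype ι] (P : Measure Z) [SigmaFinite P]
    (p : ι → Prop) [DecidablePred p] :
    MeasurePreserving (swapOn p) (doubleSampleLaw P ι) (doubleSampleLaw P ι) := by
  have he := measurePreserving_arrowProdEquivProdArrow Z Z ι (fun _ => P) (fun _ => P)
  have hswap : MeasurePreserving
      (fun (a : ι → Z × Z) k => (if p k then Prod.swap else id) (a k))
      (Measure.pi fun _ => P.prod P) (Measure.pi fun _ => P.prod P) :=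
    measurePreserving_pi _ _ fun k => by
      by_cases hk : p k
      · simpa [hk] using Measure.measurePreserving_swap
      · simpa [hk] using MeasurePreserving.id (P.prod P)
  convert he.comp (hswap.comp he.symm) using 1
  funext q
  ext k <;> by_cases hk : p k <;> simp [swapOn, hk, MeasurableEquiv.arrowProdEquivProdArrow]

theorem swapOn_eq_update [DecidableEq ι] (i : ι) (q : (ι → Z) × (ι → Z)) :
    swapOn (· = i) q = (update q.1 i (q.2 i), update q.2 i (q.1 i)) := by
  ext k <;> by_cases hk : k = i <;> simp [swapOn, hk]

theorem apply_update_eq_comp_swapOn {β : Type*} [DecidableEq ι] (g : (ι → Z) → Z → β) (i : ι) :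
    (fun q : (ι → Z) × (ι → Z) => g (update q.1 i (q.2 i)) (q.1 i)) =
      (fun q => g q.1 (q.2 i)) ∘ swapOn (· = i) := by
  funext q
  simp [swapOn_eq_update]

-- `(swapOn (· < j) q).1` runs from `q.1` to `q.2`, replacing one coordinate per step.
theorem norm_sub_le_sum_norm_sub_update_swapOn {E : Type*} [NormedAddCommGroup E] {n : ℕ}
    (A : (Fin n → Z) → E) (q : (Fin n → Z) × (Fin n → Z)) :
    ‖A q.1 - A q.2‖ ≤ ∑ j, ‖A (swapOn (· < j) q).1 -
      A (update (swapOn (· < j) q).1 j ((swapOn (· < j) q).2 j))‖ := by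
  let c : ℕ → Fin n → Z := fun l k => if (k : ℕ) < l then q.2 k else q.1 k
  have hc0 : c 0 = q.1 := by funext k; simp [c]
  have hcn : c n = q.2 := by funext k; simp [c, k.isLt]
  have hcj (j : Fin n) : c j = (swapOn (· < j) q).1 := by funext k; simp [c, swapOn]
  have hcsucc (j : Fin n) : c (j + 1) = update (c j) j (q.2 j) := by
    funext k
    by_cases hk : k = j
    · subst hk; simp [c]
    · have : (k : ℕ) < j + 1 ↔ (k : ℕ) < j := by
        have : (k : ℕ) ≠ j := Fin.val_ne_of_ne hk
        omega
      simp [c, hk, this]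
  have htele := dist_le_range_sum_dist (fun l => A (c l)) n
  rw [hc0, hcn, dist_eq_norm,
    ← Fin.sum_univ_eq_sum_range (fun l => dist (A (c l)) (A (c (l + 1))))] at htele
  refine htele.trans_eq (Finset.sum_congr rfl fun j _ => ?_)
  rw [dist_eq_norm, hcsucc, hcj]
  simp [swapOn]

theorem integrable_norm_sub_of_integrable_sum_norm_sub_update {E : Type*} [NormedAddCommGroup E]
    [MeasurableSpace E] [BorelSpace E] [SecondCountableTopology E] [MeasurableSpace Z] {n : ℕ}
    {P : Measure Z} [SigmaFinite P] {A : (Fin n → Z) → E} (hA : Measurable A)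
    (h : Integrable (fun q : (Fin n → Z) × (Fin n → Z) =>
      ∑ j, ‖A q.1 - A (update q.1 j (q.2 j))‖) (doubleSampleLaw P (Fin n))) :
    Integrable (fun q : (Fin n → Z) × (Fin n → Z) => ‖A q.1 - A q.2‖)
      (doubleSampleLaw P (Fin n)) := by
  have hstep (j : Fin n) : Integrable (fun q : (Fin n → Z) × (Fin n → Z) =>
      ‖A q.1 - A (update q.1 j (q.2 j))‖) (doubleSampleLaw P (Fin n)) :=
    h.mono' (by fun_prop) (ae_of_all _ fun q => by
      simpa using Finset.single_le_sum (f := fun j => ‖A q.1 - A (update q.1 j (q.2 j))‖)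
        (fun j _ => norm_nonneg _) (Finset.mem_univ j))
  refine (integrable_finsetSum Finset.univ fun j _ =>
    (measurePreserving_swapOn P (· < j)).integrable_comp_of_integrable (hstep j)).mono'
    (by fun_prop) (ae_of_all _ fun q => ?_)
  simpa using norm_sub_le_sum_norm_sub_update_swapOn A q

end Resampling

section Exchangeability

variable {Z : Type*} [MeasurableSpace Z] {P : Measure Z} [IsProbabilityMeasure P] {n m : ℕ}
  {g : (Fin n → Z) → Z → ℝ}

theorem integrable_apply_eval_of_integrable_sum {X : Type*} [MeasurableSpace X] {ν : Measure X}
    [SFinite ν] {f : X → Z → ℝ} (hf : Measurable (uncurry f))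
    (h : Integrable (fun q : X × (Fin (m + 1) → Z) => ∑ j, f q.1 (q.2 j))
      (ν.prod (Measure.pi fun _ => P))) (i : Fin (m + 1)) :
    Integrable (fun q : X × (Fin (m + 1) → Z) => f q.1 (q.2 i))
      (ν.prod (Measure.pi fun _ => P)) := by
  have hmeas : Measurable fun q : X × (Fin (m + 1) → Z) => f q.1 (q.2 i) := by fun_prop
  have hslice (x : X) : Measurable (f x) := hf.comp measurable_prodMk_left
  refine (integrable_prod_iff hmeas.aestronglyMeasurable).2 ⟨?_, ?_⟩
  · filter_upwards [h.prod_right_ae] with x hx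
    exact (measurePreserving_eval _ i).integrable_comp_of_integrable hx.of_sum_pi
  · refine (h.integral_norm_prod_left.const_mul 2).mono'
      hmeas.norm.stronglyMeasurable.integral_prod_right'.aestronglyMeasurable ?_
    filter_upwards [h.prod_right_ae] with x hx
    rw [Real.norm_of_nonneg (integral_nonneg fun _ => norm_nonneg _),
      integral_comp_eval_pi i (hslice x).norm.aestronglyMeasurable]
    exact integral_norm_le_two_mul_integral_norm_sum_pi hx

theorem integrable_apply_update_iff (hg : Measurable (uncurry g)) (i : Fin n) :
    Integrable (fun q => g (update q.1 i (q.2 i)) (q.1 i)) (doubleSampleLaw P (Fin n)) ↔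
      Integrable (fun q => g q.1 (q.2 i)) (doubleSampleLaw P (Fin n)) := by
  rw [apply_update_eq_comp_swapOn]
  exact (measurePreserving_swapOn P (· = i)).integrable_comp
    (by fun_prop : Measurable fun q : (Fin n → Z) × (Fin n → Z) =>
      g q.1 (q.2 i)).aestronglyMeasurable

theorem integral_apply_update_eq (hg : Measurable (uncurry g)) (i : Fin n) :
    ∫ q, g (update q.1 i (q.2 i)) (q.1 i) ∂doubleSampleLaw P (Fin n) =
      ∫ q, g q.1 (q.2 i) ∂doubleSampleLaw P (Fin n) := by
  rw [apply_update_eq_comp_swapOn]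
  exact (measurePreserving_swapOn P (· = i)).integral_comp_of_aestronglyMeasurable
    (by fun_prop : Measurable fun q : (Fin n → Z) × (Fin n → Z) =>
      g q.1 (q.2 i)).aestronglyMeasurable

theorem integral_apply_eval_eq (hg : Measurable (uncurry g)) {i : Fin n}
    (hi : Integrable (fun q => g q.1 (q.2 i)) (doubleSampleLaw P (Fin n))) :
    ∫ q, g q.1 (q.2 i) ∂doubleSampleLaw P (Fin n) =
      ∫ q, ∫ z, g q.1 z ∂P ∂doubleSampleLaw P (Fin n) := by
  rw [integral_prod _ hi, integral_fun_fst (fun t => ∫ z, g t z ∂P), probReal_univ, one_smul]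
  exact integral_congr_ae (ae_of_all _ fun t =>
    integral_comp_eval_pi i (hg.comp measurable_prodMk_left).aestronglyMeasurable)

theorem integrable_integral_of_integrable_apply_eval (hg : Measurable (uncurry g)) {i : Fin n}
    (hi : Integrable (fun q => g q.1 (q.2 i)) (doubleSampleLaw P (Fin n))) :
    Integrable (fun q => ∫ z, g q.1 z ∂P) (doubleSampleLaw P (Fin n)) := by
  have hF : Integrable (fun t => ∫ z, g t z ∂P) (Measure.pi fun _ => P) :=
    hi.integral_prod_left.congr (ae_of_all _ fun t =>
      integral_comp_eval_pi i (hg.comp measurable_prodMk_left).aestronglyMeasurable)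
  exact hF.comp_fst _

theorem integrable_sum_apply_of_dominated (hg : Measurable (uncurry g))
    {D : (Fin n → Z) → (Fin n → Z) → ℝ} (hD : ∀ t t' z, |g t z - g t' z| ≤ D t t')
    (hDint : Integrable (fun q => D q.1 q.2) (doubleSampleLaw P (Fin n)))
    (hemp : Integrable (fun q => ∑ i, g q.1 (q.1 i)) (doubleSampleLaw P (Fin n))) :
    Integrable (fun q => ∑ i, g q.1 (q.2 i)) (doubleSampleLaw P (Fin n)) := by
  have hswapped : Integrable (fun q => ∑ i, g q.2 (q.1 i)) (doubleSampleLaw P (Fin n)) := by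
    refine (hemp.norm.add (hDint.const_mul n)).mono'
      (by fun_prop : Measurable fun q : (Fin n → Z) × (Fin n → Z) =>
        ∑ i, g q.2 (q.1 i)).aestronglyMeasurable (ae_of_all _ fun q => ?_)
    have hdiff : ‖∑ i, g q.2 (q.1 i) - ∑ i, g q.1 (q.1 i)‖ ≤ n * D q.1 q.2 := by
      rw [← Finset.sum_sub_distrib]
      refine (norm_sum_le _ _).trans ?_
      simpa [abs_sub_comm] using
        Finset.sum_le_sum fun i (_ : i ∈ Finset.univ) => hD q.1 q.2 (q.1 i)
    calc ‖∑ i, g q.2 (q.1 i)‖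
        ≤ ‖∑ i, g q.1 (q.1 i)‖ + ‖∑ i, g q.2 (q.1 i) - ∑ i, g q.1 (q.1 i)‖ :=
          norm_le_norm_add_norm_sub' _ _
      _ ≤ ‖∑ i, g q.1 (q.1 i)‖ + n * D q.1 q.2 := by gcongr
  exact (Measure.measurePreserving_swap.integrable_comp
    (by fun_prop : Measurable fun q : (Fin n → Z) × (Fin n → Z) =>
      ∑ i, g q.1 (q.2 i)).aestronglyMeasurable).1 hswapped

theorem integral_mean_apply_update_eq {g : (Fin (m + 1) → Z) → Z → ℝ}
    (hg : Measurable (uncurry g))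
    (hK : Integrable (fun q => ∑ j, g q.1 (q.2 j)) (doubleSampleLaw P (Fin (m + 1)))) :
    ∫ q, (1 / ((m + 1 : ℕ) : ℝ)) * ∑ i, g (update q.1 i (q.2 i)) (q.1 i)
        ∂doubleSampleLaw P (Fin (m + 1)) =
      ∫ q, ∫ z, g q.1 z ∂P ∂doubleSampleLaw P (Fin (m + 1)) := by
  have hΦ := integrable_apply_eval_of_integrable_sum hg hK
  rw [integral_const_mul,
    integral_finsetSum _ fun i _ => (integrable_apply_update_iff hg i).2 (hΦ i)]
  simp_rw [integral_apply_update_eq hg, integral_apply_eval_eq hg (hΦ _)]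
  simp
  field_simp

end Exchangeability

theorem abs_mean_apply_update_sub_mean_le {Z W : Type*} [SeminormedAddCommGroup W] {n : ℕ}
    {ℓ : W → Z → ℝ} {L : ℝ} (hℓ : ∀ z w w', |ℓ w z - ℓ w' z| ≤ L * ‖w - w'‖)
    (A : (Fin n → Z) → W) (q : (Fin n → Z) × (Fin n → Z)) :
    |(1 / n : ℝ) * ∑ i, ℓ (A (update q.1 i (q.2 i))) (q.1 i) -
        (1 / n : ℝ) * ∑ i, ℓ (A q.1) (q.1 i)|
      ≤ L * ((1 / n : ℝ) * ∑ i, ‖A q.1 - A (update q.1 i (q.2 i))‖) := by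
  rw [← mul_sub, ← Finset.sum_sub_distrib, abs_mul, abs_of_nonneg (by positivity), mul_left_comm,
    Finset.mul_sum]
  gcongr
  refine (Finset.abs_sum_le_sum_abs _ _).trans (Finset.sum_le_sum fun i _ => ?_)
  rw [norm_sub_rev]
  exact hℓ _ _ _

theorem stability_implies_generalization_general {d n : ℕ} (hn : 0 < n)
    {Z : Type*} [MeasurableSpace Z]
    (P : Measure Z) [IsProbabilityMeasure P]
    (ℓ : EuclideanSpace ℝ (Fin d) → Z → ℝ) (Lip : ℝ)
    (hℓmeas : Measurable fun q : EuclideanSpace ℝ (Fin d) × Z => ℓ q.1 q.2)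
    (hLip : ∀ (z : Z) (w w' : EuclideanSpace ℝ (Fin d)),
      |ℓ w z - ℓ w' z| ≤ Lip * ‖w - w'‖)
    (A : (Fin n → Z) → EuclideanSpace ℝ (Fin d)) (hA : Measurable A)
    (hI₂ : Integrable
      (fun q : (Fin n → Z) × (Fin n → Z) =>
        (1 / n : ℝ) * ∑ i, ‖A q.1 - A (Function.update q.1 i (q.2 i))‖)
      ((Measure.pi fun _ : Fin n => P).prod (Measure.pi fun _ : Fin n => P)))
    (hI₃ : Integrable
      (fun q : (Fin n → Z) × (Fin n → Z) =>
        (1 / n : ℝ) * ∑ i, ℓ (A (Function.update q.1 i (q.2 i))) (q.1 i))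
      ((Measure.pi fun _ : Fin n => P).prod (Measure.pi fun _ : Fin n => P))) :
    ∫ q, ((∫ z, ℓ (A q.1) z ∂P) - (1 / n : ℝ) * ∑ i, ℓ (A q.1) (q.1 i))
        ∂((Measure.pi fun _ : Fin n => P).prod (Measure.pi fun _ : Fin n => P))
      ≤ Lip *
        ∫ q, ((1 / n : ℝ) * ∑ i, ‖A q.1 - A (Function.update q.1 i (q.2 i))‖)
          ∂((Measure.pi fun _ : Fin n => P).prod (Measure.pi fun _ : Fin n => P)) := by
  obtain ⟨m, rfl⟩ := Nat.exists_eq_add_one_of_ne_zero hn.ne'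
  have hg : Measurable (uncurry fun t z => ℓ (A t) z) := hℓmeas.comp (hA.prodMap measurable_id)
  have hunit : IsUnit (1 / ((m + 1 : ℕ) : ℝ)) := IsUnit.mk0 _ (by positivity)
  have hgap := abs_mean_apply_update_sub_mean_le hLip A
  have hGmeas : Measurable fun q : (Fin (m + 1) → Z) × (Fin (m + 1) → Z) =>
      (1 / ((m + 1 : ℕ) : ℝ)) * ∑ i, ℓ (A q.1) (q.1 i) := by fun_prop
  have hHG := (hI₂.const_mul Lip).mono'
    (hI₃.aestronglyMeasurable.sub hGmeas.aestronglyMeasurable) (ae_of_all _ hgap)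
  have hG := (hI₃.sub hHG).congr (ae_of_all _ fun q => sub_sub_cancel _ _)
  have hK := integrable_sum_apply_of_dominated hg (fun t t' z => hLip z (A t) (A t'))
    ((integrable_norm_sub_of_integrable_sum_norm_sub_update hA
      ((integrable_const_mul_iff hunit _).1 hI₂)).const_mul Lip)
    ((integrable_const_mul_iff hunit _).1 hG)
  have hF := integrable_integral_of_integrable_apply_eval hg
    (integrable_apply_eval_of_integrable_sum hg hK 0)
  rw [integral_sub hF hG, ← integral_mean_apply_update_eq hg hK, ← integral_sub hI₃ hG,
    ← integral_const_mul]
  exact integral_mono hHG (hI₂.const_mul Lip) fun q => (le_abs_self _).trans (hgap q)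

/-- Stability implies generalization (in expectation, Lipschitz case): for an
`L`-Lipschitz loss `ℓ`, i.i.d. samples `S, S̃ ∼ P^n`, replaced datasets `S^i`,
and a (measurable) learning map `A`, the expected generalization gap of `A(S)`
is bounded by `L` times the expected on-average argument stability. -/
theorem stability_implies_generalization {d n : ℕ} (hn : 0 < n)
    {Z : Type*} [MeasurableSpace Z]
    (P : Measure Z) [IsProbabilityMeasure P]
    (ℓ : EuclideanSpace ℝ (Fin d) → Z → ℝ) (Lip : ℝ) (hLip0 : 0 ≤ Lip)
    (hℓmeas : Measurable fun q : EuclideanSpace ℝ (Fin d) × Z => ℓ q.1 q.2)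
    (hLip : ∀ (z : Z) (w w' : EuclideanSpace ℝ (Fin d)),
      |ℓ w z - ℓ w' z| ≤ Lip * ‖w - w'‖)
    (A : (Fin n → Z) → EuclideanSpace ℝ (Fin d)) (hA : Measurable A)
    (hI₁ : Integrable
      (fun q : (Fin n → Z) × (Fin n → Z) =>
        (∫ z, ℓ (A q.1) z ∂P) - (1 / n : ℝ) * ∑ i, ℓ (A q.1) (q.1 i))
      ((Measure.pi fun _ : Fin n => P).prod (Measure.pi fun _ : Fin n => P)))
    (hI₂ : Integrable
      (fun q : (Fin n → Z) × (Fin n → Z) =>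
        (1 / n : ℝ) * ∑ i, ‖A q.1 - A (Function.update q.1 i (q.2 i))‖)
      ((Measure.pi fun _ : Fin n => P).prod (Measure.pi fun _ : Fin n => P)))
    (hI₃ : Integrable
      (fun q : (Fin n → Z) × (Fin n → Z) =>
        (1 / n : ℝ) * ∑ i, ℓ (A (Function.update q.1 i (q.2 i))) (q.1 i))
      ((Measure.pi fun _ : Fin n => P).prod (Measure.pi fun _ : Fin n => P))) :
    ∫ q, ((∫ z, ℓ (A q.1) z ∂P) - (1 / n : ℝ) * ∑ i, ℓ (A q.1) (q.1 i))
        ∂((Measure.pi fun _ : Fin n => P).prod (Measure.pi fun _ : Fin n => P))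
      ≤ Lip *
        ∫ q, ((1 / n : ℝ) * ∑ i, ‖A q.1 - A (Function.update q.1 i (q.2 i))‖)
          ∂((Measure.pi fun _ : Fin n => P).prod (Measure.pi fun _ : Fin n => P)) :=
  stability_implies_generalization_general hn P ℓ Lip hℓmeas hLip A hA hI₂ hI₃
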